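/- Let Γ be a connected, locally finite, accessible graph. Then the relation ∼ on C_opt, defined by C ∼ D iff C = D or (C* ⊊ D and every E ∈ C_opt with C* ⊊ E ⊆ D equals D), is an equivalence relation. -/

import Mathlib

open Pointwise

universe u

namespace CFGroups

variable {V : Type u}

/-- The edge boundary of `C`: adjacent ordered pairs `(u,v)` with `u ∈ C`, `v ∉ C`.
These are in canonical bijection with the undirected edges of `δC`. -/
def edgeBoundary (G : SimpleGraph V) (C : Set V) : Set (V × V) :=
  {p : V × V | G.Adj p.1 p.2 ∧ p.1 ∈ C ∧ p.2 ∉ C}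

/-- The vertex boundary `βC`: endpoints of edges of `δC`. -/
def vertexBoundary (G : SimpleGraph V) (C : Set V) : Set V :=
  {u : V | ∃ v : V, G.Adj u v ∧ ((u ∈ C ∧ v ∉ C) ∨ (v ∈ C ∧ u ∉ C))}

/-- A cut: `C` and its complement are nonempty and connected, and `δC` is finite. -/
def IsCut (G : SimpleGraph V) (C : Set V) : Prop :=
  C.Nonempty ∧ Cᶜ.Nonempty ∧ (G.induce C).Connected ∧ (G.induce Cᶜ).Connected ∧
    (edgeBoundary G C).Finite

/-- The weight `|δC|` of a cut. -/
noncomputable def weight (G : SimpleGraph V) (C : Set V) : ℕ :=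
  (edgeBoundary G C).ncard

/-- A `k`-cut: a cut of weight at most `k`. -/
def IsCutLe (G : SimpleGraph V) (k : ℕ) (C : Set V) : Prop :=
  IsCut G C ∧ weight G C ≤ k

/-- Two cuts are nested. -/
def Nested (C D : Set V) : Prop :=
  C ⊆ D ∨ C ⊆ Dᶜ ∨ Cᶜ ⊆ D ∨ Cᶜ ⊆ Dᶜ

/-- A bi-infinite simple path, as an injective `ℤ`-indexed sequence of successively
adjacent vertices. -/
def IsBiInfinitePath (G : SimpleGraph V) (α : ℤ → V) : Prop :=
  Function.Injective α ∧ ∀ i : ℤ, G.Adj (α i) (α (i + 1))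

/-- A one-sided infinite simple path. -/
def IsRayPath (G : SimpleGraph V) (γ : ℕ → V) : Prop :=
  Function.Injective γ ∧ ∀ i : ℕ, G.Adj (γ i) (γ (i + 1))

/-- `C(α)`: the cuts splitting the bi-infinite simple path `α` into two infinite pieces. -/
def cutsSplitting (G : SimpleGraph V) (α : ℤ → V) : Set (Set V) :=
  {C : Set V | IsCut G C ∧ (Set.range α ∩ C).Infinite ∧ (Set.range α ∩ Cᶜ).Infinite}

/-- `C_min(α)`: the cuts of minimal weight in `C(α)`. -/
def cutsMin (G : SimpleGraph V) (α : ℤ → V) : Set (Set V) :=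
  {C ∈ cutsSplitting G α | ∀ D ∈ cutsSplitting G α, weight G C ≤ weight G D}

/-- `Γ` is accessible with constant `k`: every bi-infinite simple path with `C(α) ≠ ∅`
admits a `k`-cut in `C(α)`. -/
def AccessibleWith (G : SimpleGraph V) (k : ℕ) : Prop :=
  ∀ α : ℤ → V, IsBiInfinitePath G α → (cutsSplitting G α).Nonempty →
    ∃ C ∈ cutsSplitting G α, weight G C ≤ k

/-- An accessible graph. -/
def Accessible (G : SimpleGraph V) : Prop := ∃ k : ℕ, AccessibleWith G k

/-- `m(C)`: the number of `k`-cuts not nested with `C`. -/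
noncomputable def mdeg (G : SimpleGraph V) (k : ℕ) (C : Set V) : ℕ :=
  Set.ncard {D : Set V | IsCutLe G k D ∧ ¬ Nested C D}

/-- `C_opt(α)`: the cuts of `C_min(α)` minimizing `m`. -/
def cutsOpt (G : SimpleGraph V) (k : ℕ) (α : ℤ → V) : Set (Set V) :=
  {C ∈ cutsMin G α | ∀ D ∈ cutsMin G α, mdeg G k C ≤ mdeg G k D}

/-- `C_opt`: the optimally nested cuts. -/
def COpt (G : SimpleGraph V) (k : ℕ) : Set (Set V) :=
  {C : Set V | ∃ α : ℤ → V, IsBiInfinitePath G α ∧ C ∈ cutsOpt G k α}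

/-- The relation `C ∼ D` on optimal cuts. -/
def SimRel (G : SimpleGraph V) (k : ℕ) (C D : Set V) : Prop :=
  C = D ∨ (Cᶜ ⊂ D ∧ ∀ E ∈ COpt G k, Cᶜ ⊂ E → E ⊆ D → E = D)

/-- The equivalence class `[C]` of an optimal cut `C` under `∼`. -/
def cls (G : SimpleGraph V) (k : ℕ) (C : Set V) : Set (Set V) :=
  {D ∈ COpt G k | SimRel G k C D}

/-- The structure tree `T(C_opt)`: vertices are the classes `[C]`, `C ∈ C_opt`, and for each
`C ∈ C_opt` there is an edge joining `[C]` and `[C*]`. -/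
def structureTree (G : SimpleGraph V) (k : ℕ) :
    SimpleGraph {S : Set (Set V) // ∃ C ∈ COpt G k, S = cls G k C} where
  Adj X Y := X ≠ Y ∧ ∃ C ∈ COpt G k,
    (X.1 = cls G k C ∧ Y.1 = cls G k Cᶜ) ∨ (Y.1 = cls G k C ∧ X.1 = cls G k Cᶜ)
  symm := ⟨by
    rintro X Y ⟨hne, C, hC, h⟩
    exact ⟨hne.symm, C, hC, h.symm⟩⟩
  loopless := ⟨fun X h => h.1 rfl⟩

/-- A locally finite graph. -/
def LocallyFiniteGraph (G : SimpleGraph V) : Prop :=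
  ∀ v : V, (G.neighborSet v).Finite

/-- The `r`-th neighbourhood `N^r S` of a set of vertices. -/
def nbhd (G : SimpleGraph V) (r : ℕ) (S : Set V) : Set V :=
  {v : V | ∃ u ∈ S, G.dist v u ≤ r}

/-- The block `B[C] = ⋂_{D ∼ C} N^κ D` assigned to the vertex `[C]` of the structure tree. -/
def block (G : SimpleGraph V) (k κ : ℕ) (C : Set V) : Set V :=
  ⋂ D ∈ cls G k C, nbhd G κ D

/-- `Aut(Γ)\Γ` is finite: the automorphism group of `Γ` acts with finitely many
vertex orbits and finitely many edge orbits. -/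
def AutFinOrbits (G : SimpleGraph V) : Prop :=
  (Set.range fun v : V => Set.range fun φ : G ≃g G => φ v).Finite ∧
  (Set.range fun e : G.edgeSet => Set.range fun φ : G ≃g G => Sym2.map ⇑φ e.1).Finite

/-- A group `H` (equipped with an action on the vertices) acts on the graph `G`
by graph automorphisms. -/
def ActsOn (G : SimpleGraph V) (H : Type u) [Group H] [MulAction H V] : Prop :=
  ∀ (g : H) (u v : V), G.Adj u v ↔ G.Adj (g • u) (g • v)

/-- `G\Γ` is finite: finitely many vertex orbits and finitely many edge orbits. -/
def ActFinOrbits (G : SimpleGraph V) (H : Type u) [Group H] [MulAction H V] : Prop :=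
  (Set.range fun v : V => Set.range fun g : H => g • v).Finite ∧
  (Set.range fun e : G.edgeSet => Set.range fun g : H => Sym2.map (fun v => g • v) e.1).Finite

/-- The graph has more than one end: some finite vertex set can be removed so that at least
two infinite connected components remain. -/
def MoreThanOneEnd (G : SimpleGraph V) : Prop :=
  ∃ S : Set V, S.Finite ∧ ∃ K₁ K₂ : (G.induce Sᶜ).ConnectedComponent,
    K₁ ≠ K₂ ∧ K₁.supp.Infinite ∧ K₂.supp.Infinite

/-- The Cayley graph of a group w.r.t. a generating set `S` (edges labelled by `S ∪ S⁻¹`). -/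
def cayleyGraph (K : Type u) [Group K] (S : Set K) : SimpleGraph K where
  Adj g h := g ≠ h ∧ (g⁻¹ * h ∈ S ∨ h⁻¹ * g ∈ S)
  symm := ⟨by rintro g h ⟨hne, hs⟩; exact ⟨hne.symm, hs.symm⟩⟩
  loopless := ⟨fun g h => h.1 rfl⟩

/-- A finitely generated group all of whose Cayley graphs have at most one end. -/
def FGOneEnded (K : Type u) [Group K] : Prop :=
  Group.FG K ∧ ∀ S : Set K, S.Finite → Subgroup.closure S = ⊤ →
    ¬ MoreThanOneEnd (cayleyGraph K S)

/-- An accessible group: it acts on a tree with finitely many orbits, finite edge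
stabilizers, and all vertex stabilizers finitely generated with at most one end. -/
def GroupAccessible (K : Type u) [Group K] : Prop :=
  ∃ (T : Type u) (tr : SimpleGraph T) (φ : K →* Equiv.Perm T),
    tr.IsTree ∧
    (∀ (g : K) (u v : T), tr.Adj u v ↔ tr.Adj (φ g u) (φ g v)) ∧
    (Set.range fun t : T => Set.range fun g : K => φ g t).Finite ∧
    (Set.range fun e : tr.edgeSet => Set.range fun g : K => Sym2.map ⇑(φ g) e.1).Finite ∧
    (∀ e ∈ tr.edgeSet, {g : K | Sym2.map ⇑(φ g) e = e}.Finite) ∧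
    (∀ t : T, ∃ L : Subgroup K, (L : Set K) = {g : K | φ g t = t} ∧ FGOneEnded ↥L)

/-- A tree decomposition of `G`. -/
def IsTreeDecomp (G : SimpleGraph V) {T : Type u} (tr : SimpleGraph T) (X : T → Set V) : Prop :=
  tr.IsTree ∧ (∀ v : V, ∃ t : T, v ∈ X t) ∧
  (∀ u v : V, G.Adj u v → ∃ t : T, u ∈ X t ∧ v ∈ X t) ∧
  (∀ v : V, (tr.induce {t : T | v ∈ X t}).Connected)

/-- `G` has treewidth at most `w`. -/
def TreewidthAtMost (G : SimpleGraph V) (w : ℕ) : Prop :=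
  ∃ (T : Type u) (tr : SimpleGraph T) (X : T → Set V),
    IsTreeDecomp G tr X ∧ ∀ t : T, (X t).Finite ∧ (X t).ncard ≤ w + 1

/-- `G` has finite treewidth. -/
def FiniteTreewidth (G : SimpleGraph V) : Prop := ∃ w : ℕ, TreewidthAtMost G w

/-- Uniformly bounded vertex degrees. -/
def UnifBoundedDegree (G : SimpleGraph V) : Prop :=
  ∃ d : ℕ, ∀ v : V, (G.neighborSet v).Finite ∧ (G.neighborSet v).ncard ≤ d

/-- A class of groups (in universe `u`), as a property of groups. -/
def VirtuallyIn (𝒢 : (K : Type u) → [inst : Group K] → Prop) (K : Type u) [Group K] : Prop :=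
  ∃ L : Subgroup K, L.FiniteIndex ∧ 𝒢 ↥L

/-- `K` has a quasi-isometric section: for some monoid presentation `π : Σ* → K` with
finite alphabet there is a section `σ` of `π` with `σ(1) = ε` which is quasi-isometric
w.r.t. the tree metric on `Σ*`; `d(u,v) ≤ k` is expressed via a common prefix
decomposition `u = p u'`, `v = p v'` with `|u'| + |v'| ≤ k`. -/
def HasQIS (K : Type u) [Group K] : Prop :=
  ∃ (A : Type u) (_ : Finite A) (π : List A → K),
    (∀ u v : List A, π (u ++ v) = π u * π v) ∧ π [] = 1 ∧ Function.Surjective π ∧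
    ∃ (σ : K → List A) (k : ℕ), 1 ≤ k ∧ σ 1 = [] ∧ (∀ g : K, π (σ g) = g) ∧
      ∀ (g : K) (a : A), ∃ p u' v' : List A,
        σ g = p ++ u' ∧ σ (g * π [a]) = p ++ v' ∧ u'.length + v'.length ≤ k

/-- A context-free group: the word problem w.r.t. some surjective monoid presentation
over a finite alphabet is a context-free language. -/
def IsContextFreeGroup (K : Type u) [Group K] : Prop :=
  ∃ (A : Type u) (_ : Finite A) (π : List A → K),
    (∀ u v : List A, π (u ++ v) = π u * π v) ∧ π [] = 1 ∧ Function.Surjective π ∧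
    Language.IsContextFree ({w : List A | π w = 1} : Language A)

end CFGroups

/-!
Optimal cuts are pairwise nested. Were `C ∈ C_opt(α)` and `D ∈ C_opt(β)` crossing, `α` would run
infinitely through a corner `X` of `C, D` and `β` through the opposite corner `Y` (or, in one
configuration, `α` through two opposite corners and `β` through the other two). A corner met
infinitely by `α` contains a cut of `C(α)`, so `|δC| ≤ |δX|` and `|δD| ≤ |δY|`, while
submodularity gives `|δX| + |δY| ≤ |δC| + |δD|`. Hence `X ∈ C_min(α)`, `Y ∈ C_min(β)`, and
`m(C) ≤ m(X)`, `m(D) ≤ m(Y)`. But a `k`-cut crossing `X` or `Y` crosses `C` or `D`, and `C`, `D`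
cross each other and no corner, so `m(X) + m(Y) + 2 ≤ m(C) + m(D)`.

Once `C_opt` is nested, symmetry of `∼` follows from its closure under complements, and
transitivity from a case analysis on how the cuts involved are nested.
-/

namespace CFGroups

variable {V : Type u} {G : SimpleGraph V} {k : ℕ} {C D E S : Set V} {α : ℤ → V}

section Complement

lemma edgeBoundary_compl (G : SimpleGraph V) (C : Set V) :
    edgeBoundary G Cᶜ = Prod.swap '' edgeBoundary G C := by
  ext ⟨u, v⟩
  simp only [edgeBoundary, Set.image_swap_eq_preimage_swap, Set.mem_preimage, Prod.swap_prod_mk,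
    Set.mem_ofPred_eq, Set.mem_compl_iff, not_not, G.adj_comm u v]
  tauto

lemma weight_compl (G : SimpleGraph V) (C : Set V) : weight G Cᶜ = weight G C := by
  rw [weight, weight, edgeBoundary_compl, Set.ncard_image_of_injective _ Prod.swap_injective]

lemma edgeBoundary_compl_finite (h : (edgeBoundary G C).Finite) :
    (edgeBoundary G Cᶜ).Finite := by
  rw [edgeBoundary_compl]
  exact h.image _

lemma IsCut.compl (h : IsCut G C) : IsCut G Cᶜ := by
  obtain ⟨hne, hcne, hconn, hcconn, hfin⟩ := h
  exact ⟨hcne, by rwa [compl_compl], hcconn, by rwa [compl_compl],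
    edgeBoundary_compl_finite hfin⟩

lemma IsCutLe.compl (h : IsCutLe G k C) : IsCutLe G k Cᶜ :=
  ⟨h.1.compl, (weight_compl G C).trans_le h.2⟩

lemma vertexBoundary_compl (G : SimpleGraph V) (C : Set V) :
    vertexBoundary G Cᶜ = vertexBoundary G C := by
  ext u
  simp only [vertexBoundary, Set.mem_ofPred_eq, Set.mem_compl_iff, not_not]
  exact exists_congr fun v => and_congr_right fun _ => by tauto

lemma vertexBoundary_finite (h : (edgeBoundary G C).Finite) : (vertexBoundary G C).Finite := by
  refine ((h.image Prod.fst).union (h.image Prod.snd)).subset ?_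
  rintro u ⟨v, hadj, ⟨hu, hv⟩ | ⟨hv, hu⟩⟩
  · exact Or.inl ⟨(u, v), ⟨hadj, hu, hv⟩, rfl⟩
  · exact Or.inr ⟨(v, u), ⟨hadj.symm, hv, hu⟩, rfl⟩

lemma nested_compl_left : Nested Cᶜ D ↔ Nested C D := by
  unfold Nested
  rw [compl_compl]
  tauto

lemma nested_compl_right : Nested C Dᶜ ↔ Nested C D := by
  unfold Nested
  rw [compl_compl]
  tauto

lemma Nested.symm (h : Nested C D) : Nested D C := by
  rcases h with h | h | h | h
  · exact Or.inr (Or.inr (Or.inr (Set.compl_subset_compl.mpr h)))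
  · exact Or.inr (Or.inl (Set.subset_compl_comm.mp h))
  · exact Or.inr (Or.inr (Or.inl (Set.compl_subset_comm.mp h)))
  · exact Or.inl (Set.compl_subset_compl.mp h)

lemma mdeg_compl (G : SimpleGraph V) (k : ℕ) (C : Set V) : mdeg G k Cᶜ = mdeg G k C := by
  simp only [mdeg, nested_compl_left]

lemma cutsSplitting_compl (h : C ∈ cutsSplitting G α) : Cᶜ ∈ cutsSplitting G α :=
  ⟨h.1.compl, h.2.2, by rw [compl_compl]; exact h.2.1⟩

lemma cutsMin_compl (h : C ∈ cutsMin G α) : Cᶜ ∈ cutsMin G α :=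
  ⟨cutsSplitting_compl h.1, fun D hD => (weight_compl G C).trans_le (h.2 D hD)⟩

lemma cutsOpt_compl (h : C ∈ cutsOpt G k α) : Cᶜ ∈ cutsOpt G k α :=
  ⟨cutsMin_compl h.1, fun D hD => (mdeg_compl G k C).trans_le (h.2 D hD)⟩

lemma COpt_compl (h : C ∈ COpt G k) : Cᶜ ∈ COpt G k :=
  let ⟨α, hα, hC⟩ := h
  ⟨α, hα, cutsOpt_compl hC⟩

end Complement

section Nesting

lemma corners_nonempty_of_not_nested (h : ¬ Nested C D) :
    (C ∩ D).Nonempty ∧ (C ∩ Dᶜ).Nonempty ∧ (Cᶜ ∩ D).Nonempty ∧ (Cᶜ ∩ Dᶜ).Nonempty := by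
  simp only [Nested, not_or, Set.not_subset, Set.mem_compl_iff, not_not] at h
  obtain ⟨⟨a, ha⟩, ⟨b, hb⟩, ⟨c, hc⟩, ⟨d, hd⟩⟩ := h
  exact ⟨⟨b, hb⟩, ⟨a, ha⟩, ⟨d, hd⟩, ⟨c, hc⟩⟩

lemma Nested.inter (hC : Nested C E) (hD : Nested D E) (hCD : (Cᶜ ∩ Dᶜ).Nonempty) :
    Nested (C ∩ D) E := by
  unfold Nested at *
  obtain ⟨x, hxC, hxD⟩ := hCD
  rcases hC with h | h | h | h <;> rcases hD with h' | h' | h' | h' <;> grind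

lemma Nested.inter_or_compl_inter (h : Nested C E) :
    Nested (C ∩ D) E ∨ Nested (Cᶜ ∩ Dᶜ) E := by
  unfold Nested at *
  rcases h with h | h | h | h
  · exact Or.inl (Or.inl (Set.inter_subset_left.trans h))
  · exact Or.inl (Or.inr (Or.inl (Set.inter_subset_left.trans h)))
  · exact Or.inr (Or.inl (Set.inter_subset_left.trans h))
  · exact Or.inr (Or.inr (Or.inl (Set.inter_subset_left.trans h)))

end Nesting

section Separation

lemma exists_adj_of_induce_connected {P : Set V} (hE : (G.induce E).Connected) {u v : V}
    (hu : u ∈ E) (hv : v ∈ E) (huP : u ∈ P) (hvP : v ∉ P) :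
    ∃ p ∈ E, ∃ q ∈ E, G.Adj p q ∧ p ∈ P ∧ q ∉ P := by
  obtain ⟨w⟩ := hE.preconnected ⟨u, hu⟩ ⟨v, hv⟩
  obtain ⟨d, -, hdP, hdP'⟩ := w.exists_boundary_dart (Subtype.val ⁻¹' P) huP hvP
  exact ⟨_, d.fst.2, _, d.snd.2, d.adj, hdP, hdP'⟩

lemma subset_of_agree_on_vertexBoundary (hE : (G.induce E).Connected) {x : V} (hxE : x ∈ E)
    (hxS : x ∈ S) (hagree : ∀ v ∈ vertexBoundary G S, v ∈ E ↔ v ∈ S) : E ⊆ S := by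
  intro v hvE
  by_contra hvS
  obtain ⟨p, -, q, hqE, hpq, hpS, hqS⟩ := exists_adj_of_induce_connected hE hxE hvE hxS hvS
  exact hqS ((hagree q ⟨p, hpq.symm, Or.inr ⟨hpS, hqS⟩⟩).mp hqE)

lemma IsCut.eq_of_agree_on_vertexBoundary (hE : IsCut G E) {x y : V} (hxE : x ∈ E)
    (hxS : x ∈ S) (hyE : y ∉ E) (hyS : y ∉ S)
    (hagree : ∀ v ∈ vertexBoundary G S, v ∈ E ↔ v ∈ S) : E = S := by
  refine (subset_of_agree_on_vertexBoundary hE.2.2.1 hxE hxS hagree).antisymm ?_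
  rw [← Set.compl_subset_compl]
  refine subset_of_agree_on_vertexBoundary hE.2.2.2.1 hyE hyS fun v hv => ?_
  rw [vertexBoundary_compl] at hv
  exact not_congr (hagree v hv)

lemma _root_.Ultrafilter.eventually_agree_on_finite {ι : Type*} (U : Ultrafilter ι) (F : ι → Set V)
    {B : Set V} (hB : B.Finite) :
    ∀ᶠ i in U, ∀ v ∈ B, v ∈ F i ↔ v ∈ {v | ∀ᶠ j in U, v ∈ F j} := by
  refine (Filter.eventually_all_finite hB).2 fun v _ => ?_
  by_cases hv : ∀ᶠ j in U, v ∈ F j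
  · filter_upwards [hv] with i hi using iff_of_true hi hv
  · filter_upwards [Ultrafilter.eventually_not.mpr hv] with i hi using iff_of_false hi hv

/-- A finite part of the boundary of the limit is already part of the boundary of some member of
the family. -/
lemma edgeBoundary_limit_finite {ι : Type*} (U : Ultrafilter ι) (F : ι → Set V)
    (hF : ∀ᶠ i in U, (edgeBoundary G (F i)).Finite ∧ weight G (F i) ≤ k) :
    (edgeBoundary G {v | ∀ᶠ j in U, v ∈ F j}).Finite := by
  by_contra hinf
  obtain ⟨T, hT, hTfin, hTcard⟩ := Set.Infinite.exists_subset_ncard_eq hinf (k + 1)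
  obtain ⟨i, hi, hagree⟩ := (hF.and (U.eventually_agree_on_finite F
    ((hTfin.image Prod.fst).union (hTfin.image Prod.snd)))).exists
  have hTi : T ⊆ edgeBoundary G (F i) := by
    rintro ⟨p, q⟩ hpq
    obtain ⟨hadj, hp, hq⟩ := hT hpq
    exact ⟨hadj, (hagree p (Or.inl ⟨_, hpq, rfl⟩)).mpr hp,
      fun h => hq ((hagree q (Or.inr ⟨_, hpq, rfl⟩)).mp h)⟩
  have := (Set.ncard_le_ncard hTi hi.1).trans hi.2
  omega

/-- The limit of infinitely many such cuts along a free ultrafilter has finite boundary, and a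
cut is determined by its trace on that boundary, so the limit equals eventually all of them. -/
lemma setOf_isCutLe_separating_finite (G : SimpleGraph V) (k : ℕ) (x y : V) :
    {E : Set V | IsCutLe G k E ∧ x ∈ E ∧ y ∉ E}.Finite := by
  set 𝒮 := {E : Set V | IsCutLe G k E ∧ x ∈ E ∧ y ∉ E}
  by_contra hinf
  have : Infinite 𝒮 := Set.infinite_coe_iff.mpr hinf
  let U : Ultrafilter 𝒮 := Filter.hyperfilter 𝒮
  set L := {v | ∀ᶠ F : 𝒮 in U, v ∈ F.1}
  have hLfin : (edgeBoundary G L).Finite :=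
    edgeBoundary_limit_finite U Subtype.val (.of_forall fun F => ⟨F.2.1.1.2.2.2.2, F.2.1.2⟩)
  have hxL : x ∈ L := .of_forall fun F => F.2.2.1
  have hyL : y ∉ L := fun h => (h.exists).elim fun F hF => F.2.2.2 hF
  have hL : ∀ᶠ F : 𝒮 in U, F.1 = L := by
    filter_upwards [U.eventually_agree_on_finite Subtype.val (vertexBoundary_finite hLfin)]
      with F hF using F.2.1.1.eq_of_agree_on_vertexBoundary F.2.2.1 hxL F.2.2.2 hyL hF
  refine Set.Finite.notMem_hyperfilter ?_ hL
  exact Set.Subsingleton.finite fun F hF F' hF' => Subtype.ext (hF.trans hF'.symm)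

end Separation

section Counting

def crossingCuts (G : SimpleGraph V) (k : ℕ) (C : Set V) : Set (Set V) :=
  {D | IsCutLe G k D ∧ ¬ Nested C D}

lemma mdeg_eq_ncard_crossingCuts (G : SimpleGraph V) (k : ℕ) (C : Set V) :
    mdeg G k C = (crossingCuts G k C).ncard := rfl

/-- A `k`-cut crossing `C` separates two endpoints of `δC`. -/
lemma crossingCuts_finite (G : SimpleGraph V) (k : ℕ) (hC : (edgeBoundary G C).Finite) :
    (crossingCuts G k C).Finite := by
  set W := vertexBoundary G C
  have hW : W.Finite := vertexBoundary_finite hC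
  refine (hW.biUnion fun u _ => hW.biUnion fun v _ =>
    setOf_isCutLe_separating_finite G k u v).subset ?_
  rintro E ⟨hE, hCE⟩
  obtain ⟨⟨b, hbC, hbE⟩, ⟨a, haC, haE⟩, ⟨d, hdC, hdE⟩, ⟨c, hcC, hcE⟩⟩ :=
    corners_nonempty_of_not_nested hCE
  obtain ⟨p, hpE, q, -, hpq, hpC, hqC⟩ :=
    exists_adj_of_induce_connected hE.1.2.2.1 hbE hdE hbC hdC
  obtain ⟨p', hpE', q', -, hpq', hpC', hqC'⟩ :=
    exists_adj_of_induce_connected hE.1.2.2.2.1 haE hcE haC hcC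
  exact Set.mem_biUnion (x := p) ⟨q, hpq, Or.inl ⟨hpC, hqC⟩⟩ <|
    Set.mem_biUnion (x := p') ⟨q', hpq', Or.inl ⟨hpC', hqC'⟩⟩ ⟨hE, hpE, hpE'⟩

lemma ncard_add_ncard_le {ι : Type*} {A B X Y : Set ι} (hX : X.Finite) (hY : Y.Finite)
    (hunion : A ∪ B ⊆ X ∪ Y) (hinter : A ∩ B ⊆ X ∩ Y) :
    A.ncard + B.ncard ≤ X.ncard + Y.ncard := by
  have hAB : (A ∪ B).Finite := (hX.union hY).subset hunion
  calc A.ncard + B.ncard = (A ∪ B).ncard + (A ∩ B).ncard :=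
        (Set.ncard_union_add_ncard_inter A B (hAB.subset Set.subset_union_left)
          (hAB.subset Set.subset_union_right)).symm
    _ ≤ (X ∪ Y).ncard + (X ∩ Y).ncard :=
        add_le_add (Set.ncard_le_ncard hunion (hX.union hY))
          (Set.ncard_le_ncard hinter (hX.inter_of_left Y))
    _ = X.ncard + Y.ncard := Set.ncard_union_add_ncard_inter X Y hX hY

lemma edgeBoundary_inter_union_subset (G : SimpleGraph V) (C D : Set V) :
    edgeBoundary G (C ∩ D) ∪ edgeBoundary G (C ∪ D) ⊆
      edgeBoundary G C ∪ edgeBoundary G D := by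
  rintro ⟨u, v⟩ (⟨hadj, ⟨huC, huD⟩, hv⟩ | ⟨hadj, hu, hv⟩)
  · by_cases hvC : v ∈ C
    · exact Or.inr ⟨hadj, huD, fun hvD => hv ⟨hvC, hvD⟩⟩
    · exact Or.inl ⟨hadj, huC, hvC⟩
  · rcases hu with huC | huD
    · exact Or.inl ⟨hadj, huC, fun hvC => hv (Or.inl hvC)⟩
    · exact Or.inr ⟨hadj, huD, fun hvD => hv (Or.inr hvD)⟩

lemma edgeBoundary_inter_inter_subset (G : SimpleGraph V) (C D : Set V) :
    edgeBoundary G (C ∩ D) ∩ edgeBoundary G (C ∪ D) ⊆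
      edgeBoundary G C ∩ edgeBoundary G D := by
  rintro ⟨u, v⟩ ⟨⟨hadj, ⟨huC, huD⟩, -⟩, -, -, hv⟩
  exact ⟨⟨hadj, huC, fun hvC => hv (Or.inl hvC)⟩, ⟨hadj, huD, fun hvD => hv (Or.inr hvD)⟩⟩

lemma edgeBoundary_inter_finite (hC : (edgeBoundary G C).Finite)
    (hD : (edgeBoundary G D).Finite) : (edgeBoundary G (C ∩ D)).Finite :=
  (hC.union hD).subset (Set.subset_union_left.trans (edgeBoundary_inter_union_subset G C D))

lemma weight_inter_add_weight_compl_inter_le (hC : (edgeBoundary G C).Finite)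
    (hD : (edgeBoundary G D).Finite) :
    weight G (C ∩ D) + weight G (Cᶜ ∩ Dᶜ) ≤ weight G C + weight G D := by
  rw [← Set.compl_union, weight_compl]
  exact ncard_add_ncard_le hC hD (edgeBoundary_inter_union_subset G C D)
    (edgeBoundary_inter_inter_subset G C D)

lemma ne_of_mem_crossingCuts_corner
    (hE : E ∈ crossingCuts G k (C ∩ D) ∪ crossingCuts G k (Cᶜ ∩ Dᶜ)) : E ≠ C ∧ E ≠ D := by
  constructor <;> rintro rfl <;> rcases hE with ⟨-, h⟩ | ⟨-, h⟩
  exacts [h (Or.inl Set.inter_subset_left), h (Or.inr (Or.inl Set.inter_subset_left)),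
    h (Or.inl Set.inter_subset_right), h (Or.inr (Or.inl Set.inter_subset_right))]

lemma crossingCuts_corners_union_subset (hCD : ¬ Nested C D) :
    crossingCuts G k (C ∩ D) ∪ crossingCuts G k (Cᶜ ∩ Dᶜ) ⊆
      (crossingCuts G k C \ {D}) ∪ (crossingCuts G k D \ {C}) := by
  intro E hE
  obtain ⟨hEC, hED⟩ := ne_of_mem_crossingCuts_corner hE
  have hEk : IsCutLe G k E := by rcases hE with h | h <;> exact h.1
  obtain ⟨h₁, -, -, h₄⟩ := corners_nonempty_of_not_nested hCD
  by_contra hno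
  have hCE : Nested C E := by_contra fun h => hno (Or.inl ⟨⟨hEk, h⟩, hED⟩)
  have hDE : Nested D E := by_contra fun h => hno (Or.inr ⟨⟨hEk, h⟩, hEC⟩)
  rcases hE with ⟨-, h⟩ | ⟨-, h⟩
  · exact h (hCE.inter hDE h₄)
  · exact h ((nested_compl_left.2 hCE).inter (nested_compl_left.2 hDE) (by simpa using h₁))

lemma crossingCuts_corners_inter_subset :
    crossingCuts G k (C ∩ D) ∩ crossingCuts G k (Cᶜ ∩ Dᶜ) ⊆
      (crossingCuts G k C \ {D}) ∩ (crossingCuts G k D \ {C}) := by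
  rintro E ⟨h₁, h₄⟩
  obtain ⟨hEC, hED⟩ := ne_of_mem_crossingCuts_corner (Or.inl h₁)
  refine ⟨⟨⟨h₁.1, fun h => h.inter_or_compl_inter.elim h₁.2 h₄.2⟩, hED⟩, ⟨h₁.1, fun h => ?_⟩, hEC⟩
  rw [Set.inter_comm C D] at h₁
  rw [Set.inter_comm Cᶜ Dᶜ] at h₄
  exact h.inter_or_compl_inter.elim h₁.2 h₄.2

lemma mdeg_inter_add_mdeg_compl_inter_add_two_le (hC : IsCutLe G k C) (hD : IsCutLe G k D)
    (hCD : ¬ Nested C D) :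
    mdeg G k (C ∩ D) + mdeg G k (Cᶜ ∩ Dᶜ) + 2 ≤ mdeg G k C + mdeg G k D := by
  have hfinC := crossingCuts_finite G k hC.1.2.2.2.2
  have hfinD := crossingCuts_finite G k hD.1.2.2.2.2
  have key := ncard_add_ncard_le hfinC.sdiff hfinD.sdiff (crossingCuts_corners_union_subset hCD)
    crossingCuts_corners_inter_subset
  have e₁ := Set.ncard_sdiff_singleton_add_one (s := crossingCuts G k C) ⟨hD, hCD⟩ hfinC
  have e₂ := Set.ncard_sdiff_singleton_add_one (s := crossingCuts G k D)
    ⟨hC, fun h => hCD h.symm⟩ hfinD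
  simp only [mdeg_eq_ncard_crossingCuts]
  omega

end Counting

section Component

def inducedComponent (c : (G.induce S).ConnectedComponent) : Set V := Subtype.val '' c.supp

variable {c c' : (G.induce S).ConnectedComponent}

lemma inducedComponent_subset : inducedComponent c ⊆ S := Subtype.coe_image_subset S _

lemma inducedComponent_nonempty : (inducedComponent c).Nonempty := c.nonempty_supp.image _

lemma mem_inducedComponent_mk {v : V} (hv : v ∈ S) :
    v ∈ inducedComponent ((G.induce S).connectedComponentMk ⟨v, hv⟩) := ⟨_, rfl, rfl⟩

lemma mem_inducedComponent_of_adj {v w : V} (hv : v ∈ inducedComponent c) (hw : w ∈ S)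
    (hvw : G.Adj v w) : w ∈ inducedComponent c := by
  obtain ⟨a, ha, rfl⟩ := hv
  exact ⟨⟨w, hw⟩, c.mem_supp_of_adj_mem_supp ha hvw, rfl⟩

lemma disjoint_inducedComponent (h : c ≠ c') :
    Disjoint (inducedComponent c) (inducedComponent c') := by
  refine Set.disjoint_left.2 ?_
  rintro _ ⟨a, ha, rfl⟩ ⟨b, hb, hab⟩
  obtain rfl : b = a := Subtype.ext hab
  exact h (ha.symm.trans hb)

lemma induce_inducedComponent_connected : (G.induce (inducedComponent c)).Connected := by
  let φ : c.toSimpleGraph →g G.induce (inducedComponent c) :=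
    ⟨fun x => ⟨x.1.1, x.1, x.2, rfl⟩, fun h => h⟩
  refine c.connected_toSimpleGraph.map φ ?_
  rintro ⟨_, a, ha, rfl⟩
  exact ⟨⟨a, ha⟩, rfl⟩

lemma edgeBoundary_inducedComponent_subset :
    edgeBoundary G (inducedComponent c) ⊆ edgeBoundary G S := by
  rintro ⟨u, v⟩ ⟨huv, hu, hv⟩
  exact ⟨huv, inducedComponent_subset hu, fun hvS => hv (mem_inducedComponent_of_adj hu hvS huv)⟩

lemma edgeBoundary_inducedComponent_nonempty (hconn : G.Connected) (hS : Sᶜ.Nonempty) :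
    (edgeBoundary G (inducedComponent c)).Nonempty := by
  obtain ⟨v, hv⟩ := inducedComponent_nonempty (c := c)
  obtain ⟨s, hs⟩ := hS
  obtain ⟨w⟩ := hconn.preconnected v s
  obtain ⟨d, -, hd⟩ := w.exists_boundary_dart _ hv fun h => hs (inducedComponent_subset h)
  exact ⟨_, d.adj, hd⟩

/-- Distinct components have distinct boundary edges, all lying in the finite set `δS`. -/
lemma finite_connectedComponent (hconn : G.Connected) (hS : Sᶜ.Nonempty)
    (hfin : (edgeBoundary G S).Finite) : Finite (G.induce S).ConnectedComponent := by
  have : Finite (edgeBoundary G S) := hfin.to_subtype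
  let e c := (edgeBoundary_inducedComponent_nonempty (c := c) hconn hS).some
  have he c : e c ∈ edgeBoundary G (inducedComponent c) := Set.Nonempty.some_mem _
  refine Finite.of_injective (fun c => (⟨e c, edgeBoundary_inducedComponent_subset (he c)⟩ :
    edgeBoundary G S)) fun c c' h => ?_
  by_contra hne
  have hee : e c = e c' := congrArg Subtype.val h
  exact Set.disjoint_left.1 (disjoint_inducedComponent hne) (he c).2.1 (hee ▸ (he c').2.1)

lemma exists_inducedComponent_inter_infinite (hconn : G.Connected) (hS : Sᶜ.Nonempty)
    (hfin : (edgeBoundary G S).Finite) {A : Set V} (hA : (A ∩ S).Infinite) :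
    ∃ c : (G.induce S).ConnectedComponent, (A ∩ inducedComponent c).Infinite := by
  have := finite_connectedComponent hconn hS hfin
  by_contra! h
  refine hA ((Set.finite_iUnion h).subset ?_)
  rintro v ⟨hvA, hvS⟩
  exact Set.mem_iUnion.2 ⟨_, hvA, mem_inducedComponent_mk hvS⟩

/-- Each other component of `S` hangs on the connected set `Sᶜ` by an edge. -/
lemma induce_compl_inducedComponent_connected (hconn : G.Connected)
    (hSc : (G.induce Sᶜ).Connected) : (G.induce (inducedComponent c)ᶜ).Connected := by
  have hSc_sub : Sᶜ ⊆ (inducedComponent c)ᶜ := Set.compl_subset_compl.2 inducedComponent_subset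
  obtain ⟨⟨s, hs⟩⟩ := hSc.nonempty
  refine G.induce_connected_of_patches s (hSc_sub hs) fun {v} hv => ?_
  by_cases hvS : v ∈ S
  · set c' := (G.induce S).connectedComponentMk ⟨v, hvS⟩
    have hvc' : v ∈ inducedComponent c' := mem_inducedComponent_mk hvS
    have hcc' : c' ≠ c := fun h => hv (h ▸ hvc')
    obtain ⟨⟨p, q⟩, hpq, hp, hq⟩ := edgeBoundary_inducedComponent_nonempty (c := c') hconn ⟨s, hs⟩
    have hqS : q ∉ S := fun h => hq (mem_inducedComponent_of_adj hp h hpq)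
    have hconn' := G.connected_induce_union hSc.preconnected
      induce_inducedComponent_connected.preconnected hqS hp hpq.symm
    refine ⟨Sᶜ ∪ inducedComponent c', Set.union_subset hSc_sub
      (Set.disjoint_left.1 (disjoint_inducedComponent hcc')), Or.inl hs, Or.inr hvc', ?_⟩
    exact hconn'.preconnected _ _
  · exact ⟨Sᶜ, hSc_sub, hs, hvS, hSc.preconnected _ _⟩

/-- Any other component contributes boundary edges of `S` missing from `δ(inducedComponent c)`. -/
lemma weight_inducedComponent_lt (hconn : G.Connected) (hfin : (edgeBoundary G S).Finite)
    (hS : Sᶜ.Nonempty) (hne : inducedComponent c ≠ S) :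
    weight G (inducedComponent c) < weight G S := by
  obtain ⟨x, hxS, hxc⟩ := Set.exists_of_ssubset (inducedComponent_subset.ssubset_of_ne hne)
  set c' := (G.induce S).connectedComponentMk ⟨x, hxS⟩
  have hcc' : c ≠ c' := fun h => hxc (h ▸ mem_inducedComponent_mk hxS)
  obtain ⟨e, he⟩ := edgeBoundary_inducedComponent_nonempty (c := c') hconn hS
  refine Set.ncard_lt_ncard ⟨edgeBoundary_inducedComponent_subset, fun h => ?_⟩ hfin
  exact Set.disjoint_left.1 (disjoint_inducedComponent hcc')
    (h (edgeBoundary_inducedComponent_subset he)).2.1 he.2.1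

end Component

section Corners

lemma infinite_inter_inter_or {A : Set V} (h : (A ∩ C).Infinite) (D : Set V) :
    (A ∩ (C ∩ D)).Infinite ∨ (A ∩ (C ∩ Dᶜ)).Infinite := by
  rwa [← Set.infinite_union, ← Set.inter_union_distrib_left, ← Set.inter_union_distrib_left,
    Set.union_compl_self, Set.inter_univ]

lemma infinite_inter_inter_or_right {A : Set V} (h : (A ∩ D).Infinite) (C : Set V) :
    (A ∩ (C ∩ D)).Infinite ∨ (A ∩ (Cᶜ ∩ D)).Infinite := by
  rw [Set.inter_comm C D, Set.inter_comm Cᶜ D]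
  exact infinite_inter_inter_or h C

lemma exists_cutsSplitting_weight_le (hconn : G.Connected) (hfin : (edgeBoundary G S).Finite)
    (hSc : (G.induce Sᶜ).Connected) (h₁ : (Set.range α ∩ S).Infinite)
    (h₂ : (Set.range α ∩ Sᶜ).Infinite) :
    ∃ K ∈ cutsSplitting G α, weight G K ≤ weight G S ∧ (K ≠ S → weight G K < weight G S) := by
  obtain ⟨⟨s, hs⟩⟩ := hSc.nonempty
  obtain ⟨c, hc⟩ := exists_inducedComponent_inter_infinite hconn ⟨s, hs⟩ hfin h₁
  have hsub : Sᶜ ⊆ (inducedComponent c)ᶜ := Set.compl_subset_compl.2 inducedComponent_subset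
  refine ⟨inducedComponent c, ⟨⟨inducedComponent_nonempty, ⟨s, hsub hs⟩,
    induce_inducedComponent_connected, induce_compl_inducedComponent_connected hconn hSc,
    hfin.subset edgeBoundary_inducedComponent_subset⟩, hc,
    h₂.mono (Set.inter_subset_inter_right _ hsub)⟩,
    Set.ncard_le_ncard edgeBoundary_inducedComponent_subset hfin,
    weight_inducedComponent_lt hconn hfin ⟨s, hs⟩⟩

lemma weight_le_of_mem_cutsMin (hconn : G.Connected) (hC : C ∈ cutsMin G α)
    (hfin : (edgeBoundary G S).Finite) (hSc : (G.induce Sᶜ).Connected)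
    (h₁ : (Set.range α ∩ S).Infinite) (h₂ : (Set.range α ∩ Sᶜ).Infinite) :
    weight G C ≤ weight G S ∧ (weight G S ≤ weight G C → S ∈ cutsMin G α) := by
  obtain ⟨K, hK, hKS, hlt⟩ := exists_cutsSplitting_weight_le hconn hfin hSc h₁ h₂
  have hCK := hC.2 K hK
  refine ⟨hCK.trans hKS, fun hSC => ?_⟩
  obtain rfl : K = S := by
    by_contra h
    have := hlt h
    omega
  exact ⟨hK, fun D hD => hSC.trans (hC.2 D hD)⟩

lemma corner_bounds_of_mem_cutsOpt (hconn : G.Connected) (hC : C ∈ cutsOpt G k α)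
    (hD : IsCut G D) (h₄ : (Cᶜ ∩ Dᶜ).Nonempty) (hα : (Set.range α ∩ (C ∩ D)).Infinite) :
    weight G C ≤ weight G (C ∩ D) ∧
      (weight G (C ∩ D) ≤ weight G C → mdeg G k C ≤ mdeg G k (C ∩ D)) := by
  have hCcut : IsCut G C := hC.1.1.1
  have hcompl : (G.induce (C ∩ D)ᶜ).Connected := by
    rw [Set.compl_inter]
    exact SimpleGraph.induce_union_connected hCcut.2.2.2.1.preconnected
      hD.2.2.2.1.preconnected h₄
  obtain ⟨hw, hmin⟩ := weight_le_of_mem_cutsMin hconn hC.1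
    (edgeBoundary_inter_finite hCcut.2.2.2.2 hD.2.2.2.2) hcompl hα
    (hC.1.1.2.2.mono (Set.inter_subset_inter_right _
      (Set.compl_subset_compl.2 Set.inter_subset_left)))
  exact ⟨hw, fun h => hC.2 _ (hmin h)⟩

lemma corner_bounds_of_mem_cutsOpt_right (hconn : G.Connected) (hD : D ∈ cutsOpt G k α)
    (hC : IsCut G C) (h₄ : (Cᶜ ∩ Dᶜ).Nonempty) (hα : (Set.range α ∩ (C ∩ D)).Infinite) :
    weight G D ≤ weight G (C ∩ D) ∧
      (weight G (C ∩ D) ≤ weight G D → mdeg G k D ≤ mdeg G k (C ∩ D)) := by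
  rw [Set.inter_comm C D] at hα ⊢
  exact corner_bounds_of_mem_cutsOpt hconn hD hC (by rwa [Set.inter_comm]) hα

lemma isCutLe_of_mem_cutsMin (hacc : AccessibleWith G k) (hα : IsBiInfinitePath G α)
    (hC : C ∈ cutsMin G α) : IsCutLe G k C :=
  let ⟨_, hC₀, hk⟩ := hacc α hα ⟨C, hC.1⟩
  ⟨hC.1.1, (hC.2 _ hC₀).trans hk⟩

lemma false_of_opposite_corners (hconn : G.Connected) (hacc : AccessibleWith G k)
    {β : ℤ → V} (hα : IsBiInfinitePath G α) (hβ : IsBiInfinitePath G β)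
    (hC : C ∈ cutsOpt G k α) (hD : D ∈ cutsOpt G k β) (hCD : ¬ Nested C D)
    (hα₁ : (Set.range α ∩ (C ∩ D)).Infinite) (hβ₄ : (Set.range β ∩ (Cᶜ ∩ Dᶜ)).Infinite) :
    False := by
  obtain ⟨h₁, -, -, h₄⟩ := corners_nonempty_of_not_nested hCD
  obtain ⟨hwC, hmC⟩ := corner_bounds_of_mem_cutsOpt hconn hC hD.1.1.1 h₄ hα₁
  obtain ⟨hwD, hmD⟩ := corner_bounds_of_mem_cutsOpt_right hconn (cutsOpt_compl hD)
    hC.1.1.1.compl (by rwa [compl_compl, compl_compl]) hβ₄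
  rw [weight_compl] at hwD hmD
  rw [mdeg_compl] at hmD
  have hw := weight_inter_add_weight_compl_inter_le hC.1.1.1.2.2.2.2 hD.1.1.1.2.2.2.2
  have hm := mdeg_inter_add_mdeg_compl_inter_add_two_le (isCutLe_of_mem_cutsMin hacc hα hC.1)
    (isCutLe_of_mem_cutsMin hacc hβ hD.1) hCD
  have := hmC (by omega)
  have := hmD (by omega)
  omega

lemma false_of_four_corners (hconn : G.Connected) (hacc : AccessibleWith G k)
    {β : ℤ → V} (hα : IsBiInfinitePath G α) (hβ : IsBiInfinitePath G β)
    (hC : C ∈ cutsOpt G k α) (hD : D ∈ cutsOpt G k β) (hCD : ¬ Nested C D)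
    (hα₁ : (Set.range α ∩ (C ∩ D)).Infinite) (hα₄ : (Set.range α ∩ (Cᶜ ∩ Dᶜ)).Infinite)
    (hβ₂ : (Set.range β ∩ (C ∩ Dᶜ)).Infinite) (hβ₃ : (Set.range β ∩ (Cᶜ ∩ D)).Infinite) :
    False := by
  obtain ⟨h₁, h₂, h₃, h₄⟩ := corners_nonempty_of_not_nested hCD
  have hCcut : IsCut G C := hC.1.1.1
  have hDcut : IsCut G D := hD.1.1.1
  obtain ⟨hw₁, hm₁⟩ := corner_bounds_of_mem_cutsOpt hconn hC hDcut h₄ hα₁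
  obtain ⟨hw₄, hm₄⟩ := corner_bounds_of_mem_cutsOpt hconn (cutsOpt_compl hC) hDcut.compl
    (by rwa [compl_compl, compl_compl]) hα₄
  obtain ⟨hw₂, hm₂⟩ := corner_bounds_of_mem_cutsOpt_right hconn (cutsOpt_compl hD) hCcut
    (by rwa [compl_compl]) hβ₂
  obtain ⟨hw₃, hm₃⟩ := corner_bounds_of_mem_cutsOpt_right hconn hD hCcut.compl
    (by rwa [compl_compl]) hβ₃
  rw [weight_compl] at hw₄ hm₄ hw₂ hm₂
  rw [mdeg_compl] at hm₄ hm₂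
  have hCk := isCutLe_of_mem_cutsMin hacc hα hC.1
  have hDk := isCutLe_of_mem_cutsMin hacc hβ hD.1
  have hw₁₄ := weight_inter_add_weight_compl_inter_le hCcut.2.2.2.2 hDcut.2.2.2.2
  have hw₂₃ := weight_inter_add_weight_compl_inter_le hCcut.2.2.2.2 hDcut.compl.2.2.2.2
  have hm₁₄ := mdeg_inter_add_mdeg_compl_inter_add_two_le hCk hDk hCD
  have hm₂₃ := mdeg_inter_add_mdeg_compl_inter_add_two_le hCk hDk.compl
    (nested_compl_right.not.2 hCD)
  rw [compl_compl, weight_compl] at hw₂₃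
  rw [compl_compl, mdeg_compl] at hm₂₃
  have := hm₁ (by omega)
  have := hm₂ (by omega)
  have := hm₃ (by omega)
  have := hm₄ (by omega)
  omega

lemma nested_of_inter_infinite (hconn : G.Connected) (hacc : AccessibleWith G k)
    {β : ℤ → V} (hα : IsBiInfinitePath G α) (hβ : IsBiInfinitePath G β)
    (hC : C ∈ cutsOpt G k α) (hD : D ∈ cutsOpt G k β)
    (hα₁ : (Set.range α ∩ (C ∩ D)).Infinite) : Nested C D := by
  by_contra hCD
  have opposite {C D : Set V} (hC : C ∈ cutsOpt G k α) (hD : D ∈ cutsOpt G k β) :=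
    false_of_opposite_corners hconn hacc hα hβ hC hD
  have hβ₂ := (infinite_inter_inter_or_right hD.1.1.2.2 C).resolve_right
    (opposite hC hD hCD hα₁)
  have hα₄ := (infinite_inter_inter_or hC.1.1.2.2 D).resolve_left fun hα₃ =>
    opposite (cutsOpt_compl hC) hD (nested_compl_left.not.2 hCD) hα₃ (by rwa [compl_compl])
  have hβ₃ := (infinite_inter_inter_or_right hD.1.1.2.1 C).resolve_left fun hβ₁ =>
    opposite (cutsOpt_compl hC) (cutsOpt_compl hD)
      (nested_compl_left.not.2 (nested_compl_right.not.2 hCD)) hα₄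
      (by rwa [compl_compl, compl_compl])
  exact false_of_four_corners hconn hacc hα hβ hC hD hCD hα₁ hα₄ hβ₂ hβ₃

lemma nested_of_mem_COpt (hconn : G.Connected) (hacc : AccessibleWith G k)
    (hC : C ∈ COpt G k) (hD : D ∈ COpt G k) : Nested C D := by
  obtain ⟨α, hα, hCα⟩ := hC
  obtain ⟨β, hβ, hDβ⟩ := hD
  rcases infinite_inter_inter_or hCα.1.1.2.1 D with h | h
  · exact nested_of_inter_infinite hconn hacc hα hβ hCα hDβ h
  · exact nested_compl_right.1
      (nested_of_inter_infinite hconn hacc hα hβ hCα (cutsOpt_compl hDβ) h)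

end Corners

section SimRel

def CoversCompl (G : SimpleGraph V) (k : ℕ) (C D : Set V) : Prop :=
  Cᶜ ⊂ D ∧ ∀ E ∈ COpt G k, Cᶜ ⊂ E → E ⊆ D → E = D

lemma isCut_of_mem_COpt (h : C ∈ COpt G k) : IsCut G C :=
  let ⟨_, _, hC⟩ := h
  hC.1.1.1

lemma CoversCompl.symm (h : CoversCompl G k C D) : CoversCompl G k D C := by
  obtain ⟨hCD, hmin⟩ := h
  refine ⟨⟨Set.compl_subset_comm.1 hCD.1, fun h => hCD.2 (Set.subset_compl_comm.1 h)⟩,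
    fun E hE hDE hEC => ?_⟩
  by_contra hne
  have hCE : Cᶜ ⊂ Eᶜ :=
    ⟨Set.compl_subset_compl.2 hEC, fun h => hne (hEC.antisymm (Set.compl_subset_compl.1 h))⟩
  have hED : Eᶜ = D := hmin Eᶜ (COpt_compl hE) hCE (Set.compl_subset_comm.1 hDE.1)
  exact hDE.2 (by rw [← hED, compl_compl])

lemma CoversCompl.trans (hnest : ∀ C ∈ COpt G k, ∀ D ∈ COpt G k, Nested C D)
    {F : Set V} (hC : C ∈ COpt G k) (hD : D ∈ COpt G k) (hF : F ∈ COpt G k)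
    (hCD : CoversCompl G k C D) (hDF : CoversCompl G k D F) (hCF : C ≠ F) :
    CoversCompl G k C F := by
  obtain ⟨c, hc⟩ := (isCut_of_mem_COpt hC).2.1
  obtain ⟨d, hd⟩ := (isCut_of_mem_COpt hD).2.1
  obtain ⟨f, hf⟩ := (isCut_of_mem_COpt hF).2.1
  have hDC := hCD.symm
  have hCF' : Cᶜ ⊆ F := by
    rcases hnest C hC F hF with h | h | h | h
    · exact absurd (hDF.2 C hC hDC.1 h) hCF
    · exact absurd (hDF.1.1 hd) (h (hDC.1.1 hd))
    · exact h
    · exact absurd (hDC.2 F hF hDF.1 (Set.compl_subset_compl.1 h)).symm hCF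
  have hDnF : ¬ D ⊆ F := fun h => hf (by by_cases hfD : f ∈ D; exacts [h hfD, hDF.1.1 hfD])
  refine ⟨hCF'.ssubset_of_ne fun h => (h ▸ hDF.1.1 hd : d ∈ Cᶜ) (hDC.1.1 hd),
    fun E hE hCE hEF => ?_⟩
  rcases hnest D hD E hE with h | h | h | h
  · exact absurd (h.trans hEF) hDnF
  · exact (h (hCD.1.1 hc) (hCE.1 hc)).elim
  · exact hDF.2 E hE (h.ssubset_of_ne fun h' => (h' ▸ hCE.1 hc : c ∈ Dᶜ) (hCD.1.1 hc)) hEF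
  · exact absurd (hCD.2 E hE hCE (Set.compl_subset_compl.1 h) ▸ hEF) hDnF

lemma SimRel.symm (h : SimRel G k C D) : SimRel G k D C :=
  h.elim (fun h => Or.inl h.symm) fun h => Or.inr (CoversCompl.symm h)

lemma SimRel.trans (hnest : ∀ C ∈ COpt G k, ∀ D ∈ COpt G k, Nested C D)
    {F : Set V} (hC : C ∈ COpt G k) (hD : D ∈ COpt G k) (hF : F ∈ COpt G k)
    (hCD : SimRel G k C D) (hDF : SimRel G k D F) : SimRel G k C F := by
  rcases hCD with rfl | hCD
  · exact hDF
  rcases hDF with rfl | hDF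
  · exact Or.inr hCD
  by_cases hCF : C = F
  · exact Or.inl hCF
  exact Or.inr (CoversCompl.trans hnest hC hD hF hCD hDF hCF)

end SimRel

end CFGroups

open CFGroups in
theorem simRel_equivalence_general
    {V : Type u} (G : SimpleGraph V) (hconn : G.Connected)
    (k : ℕ) (hacc : CFGroups.AccessibleWith G k) :
    Equivalence (fun C D : {C : Set V // C ∈ CFGroups.COpt G k} =>
      CFGroups.SimRel G k C.1 D.1) := by
  have hnest : ∀ C ∈ COpt G k, ∀ D ∈ COpt G k, Nested C D :=
    fun _ hC _ hD => nested_of_mem_COpt hconn hacc hC hD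
  exact ⟨fun _ => Or.inl rfl, SimRel.symm, fun {C D F} hCD hDF => hCD.trans hnest C.2 D.2 F.2 hDF⟩

open CFGroups in
/-- In a connected, locally finite, accessible graph (with accessibility
constant `k` fixed), the relation `∼` on `C_opt` is an equivalence relation. -/
theorem simRel_equivalence
    {V : Type u} (G : SimpleGraph V) (hconn : G.Connected)
    (hlf : CFGroups.LocallyFiniteGraph G)
    (k : ℕ) (hacc : CFGroups.AccessibleWith G k) :
    Equivalence (fun C D : {C : Set V // C ∈ CFGroups.COpt G k} =>
      CFGroups.SimRel G k C.1 D.1) :=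
  simRel_equivalence_general G hconn k hacc
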